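/- Let n ≥ 1, Ω ⊆ 𝕆_sⁿ and let f : Ω → 𝕆 be strong slice regular. Then for every I ∈ 𝕊 such that Ω_I := Ω ∩ ℂ_Iⁿ is open in ℂ_Iⁿ, the restriction f_I := f|_{Ω_I} is holomorphic. -/

import Mathlib

/-! Octonions via the Cayley–Dickson construction on the quaternions,
the n-dimensional quadratic cone, the slice topology, and slice regularity. -/

noncomputable section
open Quaternion Topology

/-- The octonions, as `ℍ × ℍ` with the (L²) Euclidean norm and
Cayley–Dickson multiplication. -/
abbrev Oct : Type := WithLp 2 (ℍ × ℍ)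

namespace Oct

def c1 (p : Oct) : ℍ := (WithLp.equiv 2 (ℍ × ℍ) p).1
def c2 (p : Oct) : ℍ := (WithLp.equiv 2 (ℍ × ℍ) p).2
def mk (a b : ℍ) : Oct := (WithLp.equiv 2 (ℍ × ℍ)).symm (a, b)

instance : One Oct := ⟨mk 1 0⟩

/-- Cayley–Dickson multiplication. -/
instance : Mul Oct :=
  ⟨fun p q => mk (c1 p * c1 q - star (c2 q) * c2 p) (c2 q * c1 p + c2 p * star (c1 q))⟩

/-- Octonionic conjugation. -/
instance : Star Oct := ⟨fun p => mk (star (c1 p)) (-(c2 p))⟩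

/-- Inverse: `p⁻¹ = ‖p‖⁻² • (star p)` (so `0⁻¹ = 0`). -/
instance : Inv Oct := ⟨fun p => (‖p‖ ^ 2)⁻¹ • star p⟩

/-- The real inner product on `𝕆 ≅ ℝ⁸`, via polarization. -/
def oinner (p q : Oct) : ℝ := (1 / 4) * (‖p + q‖ ^ 2 - ‖p - q‖ ^ 2)

/-- The sphere `𝕊` of imaginary units of the octonions. -/
def Sph : Set Oct := {I | I * I = -1}

/-- The slice complex plane `ℂ_I = ℝ + ℝ I ⊆ 𝕆`. -/
def CI (I : Oct) : Set Oct := {z | ∃ s t : ℝ, z = s • (1 : Oct) + t • I}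

end Oct

open Oct

/-- The point `x + y I ∈ ℂ_Iⁿ ⊆ 𝕆ⁿ`. -/
def aff {n : ℕ} (x y : Fin n → ℝ) (I : Oct) : Fin n → Oct :=
  fun m => x m • (1 : Oct) + y m • I

/-- The embedding `ℝⁿ ⊆ 𝕆ⁿ`. -/
def ofRealn {n : ℕ} (x : Fin n → ℝ) : Fin n → Oct := fun m => x m • (1 : Oct)

/-- The slice `ℂ_Iⁿ ⊆ 𝕆ⁿ`. -/
def slicen (n : ℕ) (I : Oct) : Set (Fin n → Oct) := {q | ∃ x y : Fin n → ℝ, q = aff x y I}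

/-- The `n`-dimensional quadratic cone `𝕆ₛⁿ = ⋃_{I ∈ 𝕊} ℂ_Iⁿ`. -/
def cone (n : ℕ) : Set (Fin n → Oct) := ⋃ I ∈ Sph, slicen n I

/-- The slice topology `τ_s`: a set is open iff its trace on every slice `ℂ_Iⁿ`
is open (expressed via the canonical parametrizations `(x,y) ↦ x + yI`). -/
def τs (n : ℕ) : TopologicalSpace (Fin n → Oct) :=
  ⨆ I : Sph, TopologicalSpace.coinduced
    (fun p : (Fin n → ℝ) × (Fin n → ℝ) => aff p.1 p.2 I.1) inferInstance

/-- A slice-open subset of the quadratic cone. -/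
def SliceOpen (n : ℕ) (Ω : Set (Fin n → Oct)) : Prop :=
  Ω ⊆ cone n ∧ IsOpen[τs n] Ω

/-- A slice-domain: a nonempty slice-connected slice-open subset of the cone. -/
def SliceDomain (n : ℕ) (Ω : Set (Fin n → Oct)) : Prop :=
  SliceOpen n Ω ∧ @IsConnected _ (τs n) Ω

/-- Real-connectedness: `Ω ∩ ℝⁿ` is a (pre)connected subset of `ℝⁿ`. -/
def RealConnected (n : ℕ) (Ω : Set (Fin n → Oct)) : Prop :=
  IsPreconnected {x : Fin n → ℝ | ofRealn x ∈ Ω}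

/-- Axially symmetric subsets of the cone. -/
def AxSymm (n : ℕ) (Ω : Set (Fin n → Oct)) : Prop :=
  ∀ (x y : Fin n → ℝ), ∀ I ∈ Sph, ∀ J ∈ Sph, aff x y I ∈ Ω → aff x y J ∈ Ω

/-- The upper half-space `ℝ²ⁿ₊`: pairs `(x,y)` with `y = 0` or the first
nonzero coordinate of `y` positive. -/
def pos2n (n : ℕ) : Set ((Fin n → ℝ) × (Fin n → ℝ)) :=
  {p | p.2 = 0 ∨ ∃ m : Fin n, 0 < p.2 m ∧ ∀ k : Fin n, k < m → p.2 k = 0}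

/-- `Ω_{s₁}`. -/
def s1 {n : ℕ} (Ω : Set (Fin n → Oct)) : Set ((Fin n → ℝ) × (Fin n → ℝ)) :=
  {p | ∃ I ∈ Sph, aff p.1 p.2 I ∈ Ω}

/-- `Ω_{s₂}`. -/
def s2 {n : ℕ} (Ω : Set (Fin n → Oct)) : Set ((Fin n → ℝ) × (Fin n → ℝ)) :=
  {p | ∃ J ∈ Sph, ∃ K ∈ Sph, J ≠ K ∧ aff p.1 p.2 J ∈ Ω ∧ aff p.1 p.2 K ∈ Ω}

/-- Slice functions: induced on `Ω_{s₂}⁺` by a pair `(F₁, F₂)` via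
`f(x + yI) = F₁(x,y) + I·F₂(x,y)`. -/
def IsSliceFun (n : ℕ) (Ω : Set (Fin n → Oct)) (f : (Fin n → Oct) → Oct) : Prop :=
  ∃ F₁ F₂ : (Fin n → ℝ) × (Fin n → ℝ) → Oct,
    ∀ x y : Fin n → ℝ, (x, y) ∈ s2 Ω ∩ pos2n n → ∀ I ∈ Sph, aff x y I ∈ Ω →
      f (aff x y I) = F₁ (x, y) + I * F₂ (x, y)

/-- Holomorphy of a function of `n` slice variables, read through the
parametrization `(x,y) ↦ x + yI`: continuous partial derivatives (i.e. `C¹`)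
and the Cauchy–Riemann equations `(∂/∂xₘ + I ∂/∂yₘ) g = 0` on `U`. -/
def Holo (n : ℕ) (I : Oct) (g : (Fin n → ℝ) × (Fin n → ℝ) → Oct)
    (U : Set ((Fin n → ℝ) × (Fin n → ℝ))) : Prop :=
  ContDiffOn ℝ 1 g U ∧
  ∀ p ∈ U, ∀ m : Fin n,
    fderiv ℝ g p (Pi.single m 1, 0) + I * fderiv ℝ g p (0, Pi.single m 1) = 0

/-- Weak slice regularity: each restriction `f|_{Ω ∩ ℂ_Iⁿ}` is holomorphic. -/
def WSliceReg (n : ℕ) (Ω : Set (Fin n → Oct)) (f : (Fin n → Oct) → Oct) : Prop :=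
  ∀ I ∈ Sph, Holo n I (fun p => f (aff p.1 p.2 I)) {p | aff p.1 p.2 I ∈ Ω}

/-- The complex structure `σ(a,b) = (−b,a)` on `𝕆²`. -/
def sigma2 : Oct × Oct → Oct × Oct := fun w => (-w.2, w.1)

/-- Holomorphic stem maps: `F : V → 𝕆²` extends to a `C¹` map `G` on an open
neighborhood `U ⊇ V` satisfying `(∂/∂xₘ + σ ∂/∂yₘ) G = 0` on `U`. -/
def StemHolo (n : ℕ) (V : Set ((Fin n → ℝ) × (Fin n → ℝ)))
    (F : (Fin n → ℝ) × (Fin n → ℝ) → Oct × Oct) : Prop :=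
  ∃ (U : Set ((Fin n → ℝ) × (Fin n → ℝ))) (G : (Fin n → ℝ) × (Fin n → ℝ) → Oct × Oct),
    IsOpen U ∧ V ⊆ U ∧ Set.EqOn G F V ∧ ContDiffOn ℝ 1 G U ∧
    ∀ p ∈ U, ∀ m : Fin n,
      fderiv ℝ G p (Pi.single m 1, 0) + sigma2 (fderiv ℝ G p (0, Pi.single m 1)) = 0

/-- Strong slice regularity: `f` is induced by a holomorphic stem map on `Ω_{s₁}`. -/
def SSliceReg (n : ℕ) (Ω : Set (Fin n → Oct)) (f : (Fin n → Oct) → Oct) : Prop :=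
  ∃ F : (Fin n → ℝ) × (Fin n → ℝ) → Oct × Oct, StemHolo n (s1 Ω) F ∧
    ∀ x y : Fin n → ℝ, ∀ I ∈ Sph, aff x y I ∈ Ω →
      f (aff x y I) = (F (x, y)).1 + I * (F (x, y)).2

/-- An s-basis `{I, J, K}` of the octonions. -/
def IsSBasis (I J K : Oct) : Prop :=
  I ∈ Sph ∧ J ∈ Sph ∧ K ∈ Sph ∧
  LinearIndependent ℝ ![(1 : Oct), I, J, I * J, K, J * K, I * K, (I * J) * K] ∧
  Submodule.span ℝ (Set.range ![(1 : Oct), I, J, I * J, K, J * K, I * K, (I * J) * K]) = ⊤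

/-- Iterated left multiplication `L_w^β = (L_{w₁})^{β₁} ∘ ⋯ ∘ (L_{wₙ})^{βₙ}`. -/
def Lpow {n : ℕ} (w : Fin n → Oct) (β : Fin n → ℕ) : Oct → Oct :=
  fun a => (List.finRange n).foldr (fun ℓ c => (fun o => w ℓ * o)^[β ℓ] c) a

/-- The `*`-power `(q − p)^{*α} a = ∑_{β ≤ α} C(α,β) L_q^β (L_{−p}^{α−β} a)`. -/
def starPow {n : ℕ} (p : Fin n → Oct) (α : Fin n → ℕ) (a : Oct) (q : Fin n → Oct) : Oct :=
  ∑ β ∈ Finset.Iic α, (∏ ℓ, (α ℓ).choose (β ℓ)) • Lpow q β (Lpow (-p) (α - β) a)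

/-- The `ℓ`-th slice derivative `∂_ℓ f (x + w) = (∂/∂x_ℓ) f (x + w)`. -/
def sderiv {n : ℕ} (ℓ : Fin n) (f : (Fin n → Oct) → Oct) : (Fin n → Oct) → Oct :=
  fun q => deriv (fun t : ℝ => f (fun m => q m + (if m = ℓ then t else 0) • (1 : Oct))) 0

/-- The iterated slice derivative `f^{(α)} = (∂₁)^{α₁} ⋯ (∂ₙ)^{αₙ} f`. -/
def sderivMulti {n : ℕ} (α : Fin n → ℕ) (f : (Fin n → Oct) → Oct) : (Fin n → Oct) → Oct :=
  (List.finRange n).foldr (fun ℓ g => (sderiv ℓ)^[α ℓ] g) f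

/-- The slice-polydisc `P̃(q₀, r)` (relative to `I ∈ 𝕊` with `q₀ ∈ ℂ_Iⁿ`):
points `x + yJ` with `x ± yI` in the closed polydisc `P_I(q₀, r)`. -/
def polyDisc {n : ℕ} (q₀ : Fin n → Oct) (I : Oct) (r : Fin n → ℝ) : Set (Fin n → Oct) :=
  {q | ∃ x y : Fin n → ℝ, ∃ J ∈ Sph, q = aff x y J ∧
        (∀ ℓ, ‖aff x y I ℓ - q₀ ℓ‖ ≤ r ℓ) ∧ (∀ ℓ, ‖aff x (-y) I ℓ - q₀ ℓ‖ ≤ r ℓ)}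

/-! On the slice `ℂ_I` the map `(a, b) ↦ a + I b` intertwines the complex structure `σ` of `𝕆²`
with left multiplication by `I`, because `I (I b) = (I I) b = -b` by left alternativity of the
octonions. Hence it carries the Cauchy–Riemann equations of a holomorphic stem map to those of
`f(x + yI) = F₁(x, y) + I F₂(x, y)`. -/

namespace Oct

@[simp] lemma c1_mul (p q : Oct) : c1 (p * q) = c1 p * c1 q - star (c2 q) * c2 p := rfl
@[simp] lemma c2_mul (p q : Oct) : c2 (p * q) = c2 q * c1 p + c2 p * star (c1 q) := rfl
@[simp] lemma c1_add (p q : Oct) : c1 (p + q) = c1 p + c1 q := rfl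
@[simp] lemma c2_add (p q : Oct) : c2 (p + q) = c2 p + c2 q := rfl
@[simp] lemma c1_neg (p : Oct) : c1 (-p) = -c1 p := rfl
@[simp] lemma c2_neg (p : Oct) : c2 (-p) = -c2 p := rfl
@[simp] lemma c1_smul (r : ℝ) (p : Oct) : c1 (r • p) = r • c1 p := rfl
@[simp] lemma c2_smul (r : ℝ) (p : Oct) : c2 (r • p) = r • c2 p := rfl
@[simp] lemma c1_one : c1 (1 : Oct) = 1 := rfl
@[simp] lemma c2_one : c2 (1 : Oct) = 0 := rfl

lemma ext {p q : Oct} (h1 : c1 p = c1 q) (h2 : c2 p = c2 q) : p = q :=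
  (WithLp.equiv 2 (ℍ × ℍ)).injective (Prod.ext h1 h2)

lemma mul_add (x a b : Oct) : x * (a + b) = x * a + x * b := by
  refine ext ?_ ?_ <;> simp only [c1_mul, c2_mul, c1_add, c2_add, star_add] <;> noncomm_ring

lemma mul_smul (r : ℝ) (x a : Oct) : x * (r • a) = r • (x * a) := by
  refine ext ?_ ?_ <;>
    simp only [c1_mul, c2_mul, c1_smul, c2_smul, Quaternion.star_smul, smul_mul_assoc,
      mul_smul_comm, smul_sub, smul_add]

lemma neg_one_mul (x : Oct) : -1 * x = -x := by
  refine ext ?_ ?_ <;> simp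

lemma mul_mul_self_left (x y : Oct) : x * (x * y) = x * x * y := by
  set p := c1 x
  set q := c2 x
  -- `p + p̄` and `q̄ q` are real, hence central in `ℍ`.
  have hre : ∀ z : ℍ, Commute (p + star p) z := by
    rw [Quaternion.self_add_star']; exact Quaternion.coe_commute _
  have hnorm : ∀ z : ℍ, Commute (star q * q) z := by
    rw [Quaternion.star_mul_self]; exact Quaternion.coe_commute _
  have hqq : q * star q = star q * q := (star_comm_self' q).symm
  refine ext ?_ ?_ <;> simp only [c1_mul, c2_mul, star_add, star_sub, star_mul, star_star] <;>
    rw [← sub_eq_zero]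
  · calc _ = (star (c2 y) * q * (p + star p) - (p + star p) * (star (c2 y) * q))
          + (star q * q * c1 y - c1 y * (star q * q)) := by noncomm_ring
      _ = 0 := by rw [(hre _).eq, (hnorm _).eq, sub_self, sub_self, add_zero]
  · calc _ = q * (star (c1 y) * (p + star p) - (p + star p) * star (c1 y))
          + (c2 y * (star q * q) - star q * q * c2 y) + (star q * q - q * star q) * c2 y := by
            noncomm_ring
      _ = 0 := by rw [(hre _).eq, (hnorm _).eq, hqq]; simp

lemma mul_mul_of_mem_Sph {I : Oct} (hI : I ∈ Sph) (a : Oct) : I * (I * a) = -a := by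
  rw [mul_mul_self_left, show I * I = -1 from hI, neg_one_mul]

def mulLeftCLM (x : Oct) : Oct →L[ℝ] Oct :=
  LinearMap.toContinuousLinearMap
    { toFun := (x * ·)
      map_add' := mul_add x
      map_smul' := fun r a => mul_smul r x a }

end Oct

def sliceEval (I : Oct) : Oct × Oct →L[ℝ] Oct :=
  ContinuousLinearMap.fst ℝ Oct Oct + (Oct.mulLeftCLM I).comp (ContinuousLinearMap.snd ℝ Oct Oct)

lemma sliceEval_apply (I : Oct) (w : Oct × Oct) : sliceEval I w = w.1 + I * w.2 := rfl

lemma sliceEval_sigma2 {I : Oct} (hI : I ∈ Sph) (w : Oct × Oct) :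
    sliceEval I (sigma2 w) = I * sliceEval I w := by
  simp only [sliceEval_apply, sigma2, Oct.mul_add, Oct.mul_mul_of_mem_Sph hI]
  exact add_comm _ _

lemma holo_sliceEval_comp {n : ℕ} {I : Oct} (hI : I ∈ Sph) {U : Set ((Fin n → ℝ) × (Fin n → ℝ))}
    (hU : IsOpen U) {G : (Fin n → ℝ) × (Fin n → ℝ) → Oct × Oct} (hG : ContDiffOn ℝ 1 G U)
    (hCR : ∀ p ∈ U, ∀ m : Fin n,
      fderiv ℝ G p (Pi.single m 1, 0) + sigma2 (fderiv ℝ G p (0, Pi.single m 1)) = 0) :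
    Holo n I (fun p => sliceEval I (G p)) U := by
  refine ⟨(sliceEval I).contDiff.comp_contDiffOn hG, fun p hp m => ?_⟩
  have hGp : DifferentiableAt ℝ G p :=
    (hG.contDiffAt (hU.mem_nhds hp)).differentiableAt one_ne_zero
  rw [fderiv_fun_comp p (sliceEval I).differentiableAt hGp, (sliceEval I).fderiv,
    ContinuousLinearMap.comp_apply, ContinuousLinearMap.comp_apply, ← sliceEval_sigma2 hI,
    ← map_add, hCR p hp m, map_zero]

lemma Holo.congr_mono {n : ℕ} {I : Oct} {g h : (Fin n → ℝ) × (Fin n → ℝ) → Oct}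
    {U V : Set ((Fin n → ℝ) × (Fin n → ℝ))} (hg : Holo n I g U) (hV : IsOpen V) (hVU : V ⊆ U)
    (hhg : Set.EqOn h g V) : Holo n I h V := by
  refine ⟨(hg.1.mono hVU).congr hhg, fun p hp m => ?_⟩
  rw [(Filter.eventuallyEq_of_mem (hV.mem_nhds hp) hhg).fderiv_eq]
  exact hg.2 p (hVU hp) m

theorem strong_slice_regular_holomorphic_on_slices_general (n : ℕ)
    (Ω : Set (Fin n → Oct)) (f : (Fin n → Oct) → Oct)
    (hf : SSliceReg n Ω f) :
    ∀ I ∈ Sph, IsOpen {p : (Fin n → ℝ) × (Fin n → ℝ) | aff p.1 p.2 I ∈ Ω} →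
      Holo n I (fun p => f (aff p.1 p.2 I)) {p | aff p.1 p.2 I ∈ Ω} := by
  obtain ⟨F, ⟨U, G, hU, hs1U, hGF, hG, hCR⟩, hfF⟩ := hf
  intro I hI hΩI
  have hΩIs1 : {p | aff p.1 p.2 I ∈ Ω} ⊆ s1 Ω := fun p hp => ⟨I, hI, hp⟩
  refine (holo_sliceEval_comp hI hU hG hCR).congr_mono hΩI (hΩIs1.trans hs1U) ?_
  intro p hp
  show f (aff p.1 p.2 I) = sliceEval I (G p)
  rw [sliceEval_apply, hGF (hΩIs1 hp)]
  exact hfF p.1 p.2 I hI hp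

/-- A strong slice regular function is holomorphic on every
slice `Ω_I = Ω ∩ ℂ_Iⁿ` that is open in `ℂ_Iⁿ`. -/
theorem strong_slice_regular_holomorphic_on_slices (n : ℕ) (hn : 1 ≤ n)
    (Ω : Set (Fin n → Oct)) (hΩ : Ω ⊆ cone n) (f : (Fin n → Oct) → Oct)
    (hf : SSliceReg n Ω f) :
    ∀ I ∈ Sph, IsOpen {p : (Fin n → ℝ) × (Fin n → ℝ) | aff p.1 p.2 I ∈ Ω} →
      Holo n I (fun p => f (aff p.1 p.2 I)) {p | aff p.1 p.2 I ∈ Ω} :=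
  strong_slice_regular_holomorphic_on_slices_general n Ω f hf

end
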